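/- For all U, V ∈ 𝓕, e(Φ(U), Φ(V)) ≤ β·e(U, V); consequently d(Φ(U), Φ(V)) ≤ β·d(U, V), i.e., the dynamic programming operator Φ is a β-contraction on (𝓕, d). -/
import Mathlib


/-- The upset of `A` within `[0,1]^K`: points of `[0,1]^K` dominating some point of `A`. -/
def upset (K : ℕ) (A : Set (Fin K → ℝ)) : Set (Fin K → ℝ) :=
  {x | x ∈ Set.Icc (0 : Fin K → ℝ) 1 ∧ ∃ y ∈ A, y ≤ x}

/-- Membership in the space `𝓕`: a nonempty Pareto frontier in `[0,1]^K`
(no element dominates a different element) whose upset is closed and convex. -/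
def memF (K : ℕ) (V : Set (Fin K → ℝ)) : Prop :=
  V.Nonempty ∧ V ⊆ Set.Icc (0 : Fin K → ℝ) 1 ∧
    (∀ u ∈ V, ∀ v ∈ V, u ≤ v → u = v) ∧
    IsClosed (upset K V) ∧ Convex ℝ (upset K V)

/-- The metric `d` on `𝓕`: Hausdorff distance (for the ℓ∞ norm) between upsets. -/
noncomputable def dF (K : ℕ) (U V : Set (Fin K → ℝ)) : ℝ :=
  Metric.hausdorffDist (upset K U) (upset K V)

/-- `e(U,V)`: the least `ε ≥ 0` such that every `u ∈ U` `ε`-dominates some `v ∈ V`. -/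
noncomputable def eDom (K : ℕ) (U V : Set (Fin K → ℝ)) : ℝ :=
  sInf {ε : ℝ | 0 ≤ ε ∧ ∀ u ∈ U, ∃ v ∈ V, ∀ i, v i ≤ u i + ε}

/-- The lower Pareto frontier `Λ(S)`: the minimal elements of `S` in the
coordinatewise order, i.e. the elements of `S` dominating no other element of `S`. -/
def pareto (K : ℕ) (S : Set (Fin K → ℝ)) : Set (Fin K → ℝ) :=
  {x ∈ S | ∀ y ∈ S, y ≤ x → y = x}

/-- The probability simplex over `Fin m`. -/
def simplex (m : ℕ) : Set (Fin m → ℝ) :=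
  {α | (∀ a, 0 ≤ α a) ∧ ∑ a, α a = 1}

/-- The one-stage operator `Ψ`. -/
def psi (K m n : ℕ) (hn : 0 < n) (β : ℝ) (r : Fin K → Fin m → Fin n → ℝ)
    (S : Set (Fin K → ℝ)) : Set (Fin K → ℝ) :=
  {u | ∃ α ∈ simplex m, ∃ R : Fin m → Fin n → Fin K → ℝ,
    (∀ a b, R a b ∈ S) ∧
    ∀ k, u k = Finset.univ.sup'
      (Finset.univ_nonempty_iff.mpr (Fin.pos_iff_nonempty.mp hn))
      (fun b => ∑ a, α a * (r k a b + β * R a b k))}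

open Set Metric Finset

variable {K m n : ℕ}

lemma upset_subset_Icc (A : Set (Fin K → ℝ)) : upset K A ⊆ Set.Icc 0 1 := fun _ h => h.1

lemma mem_upset_self {A : Set (Fin K → ℝ)} (hA : A ⊆ Set.Icc 0 1) {x} (hx : x ∈ A) :
    x ∈ upset K A := ⟨hA hx, x, hx, le_rfl⟩

lemma subset_upset {A : Set (Fin K → ℝ)} (hA : A ⊆ Set.Icc 0 1) : A ⊆ upset K A :=
  fun _ hx => mem_upset_self hA hx

lemma upset_nonempty {A : Set (Fin K → ℝ)} (hA : A.Nonempty) (hAI : A ⊆ Set.Icc 0 1) :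
    (upset K A).Nonempty := hA.imp fun _ hx => mem_upset_self hAI hx

lemma upset_bounded (A : Set (Fin K → ℝ)) : Bornology.IsBounded (upset K A) :=
  (Metric.isBounded_Icc _ _).subset (upset_subset_Icc A)

lemma psi_mono (hn : 0 < n) (β : ℝ) (r : Fin K → Fin m → Fin n → ℝ)
    {S T : Set (Fin K → ℝ)} (h : S ⊆ T) :
    psi K m n hn β r S ⊆ psi K m n hn β r T := by
  rintro u ⟨α, hα, R, hR, hu⟩
  exact ⟨α, hα, R, fun a b => h (hR a b), hu⟩
lemma bFin (hn : 0 < n) : (Finset.univ : Finset (Fin n)).Nonempty :=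
  Finset.univ_nonempty_iff.mpr (Fin.pos_iff_nonempty.mp hn)

lemma psi_subset_Icc (hn : 0 < n) {β : ℝ} (hβ0 : 0 ≤ β) {r : Fin K → Fin m → Fin n → ℝ}
    (hr : ∀ k a b, r k a b ∈ Set.Icc (0:ℝ) (1 - β)) {S : Set (Fin K → ℝ)}
    (hS : S ⊆ Set.Icc 0 1) :
    psi K m n hn β r S ⊆ Set.Icc 0 1 := by
  rintro u ⟨α, hα, R, hR, hu⟩
  have hterm : ∀ k b, (0:ℝ) ≤ ∑ a, α a * (r k a b + β * R a b k) ∧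
      ∑ a, α a * (r k a b + β * R a b k) ≤ 1 := by
    intro k b
    have h01 : ∀ a, (0:ℝ) ≤ r k a b + β * R a b k ∧ r k a b + β * R a b k ≤ 1 := by
      intro a
      have h1 := (hr k a b).1; have h2 := (hr k a b).2
      have h3 := (hS (hR a b)).1 k; have h4 := (hS (hR a b)).2 k
      simp only [Pi.zero_apply] at h3; simp only [Pi.one_apply] at h4
      constructor
      · exact add_nonneg h1 (mul_nonneg hβ0 h3)
      · nlinarith
    constructor
    · exact Finset.sum_nonneg fun a _ => mul_nonneg (hα.1 a) (h01 a).1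
    · calc ∑ a, α a * (r k a b + β * R a b k) ≤ ∑ a, α a * 1 :=
            Finset.sum_le_sum fun a _ => mul_le_mul_of_nonneg_left (h01 a).2 (hα.1 a)
        _ = 1 := by simp [hα.2]
  constructor
  · intro k
    simp only [Pi.zero_apply]
    rw [hu k]
    exact Finset.le_sup'_of_le _ (Finset.mem_univ ⟨0, hn⟩) (hterm k ⟨0, hn⟩).1
  · intro k
    simp only [Pi.one_apply]
    rw [hu k]
    exact Finset.sup'_le _ _ fun b _ => (hterm k b).2
/-- The map whose image over the simplex times choices is `psi`. -/
noncomputable def psiMap (K m n : ℕ) (hn : 0 < n) (β : ℝ) (r : Fin K → Fin m → Fin n → ℝ) :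
    (Fin m → ℝ) × (Fin m → Fin n → Fin K → ℝ) → (Fin K → ℝ) :=
  fun p k => Finset.univ.sup' (bFin hn)
    (fun b => ∑ a, p.1 a * (r k a b + β * p.2 a b k))

lemma psi_eq_image (hn : 0 < n) (β : ℝ) (r : Fin K → Fin m → Fin n → ℝ)
    (S : Set (Fin K → ℝ)) :
    psi K m n hn β r S = psiMap K m n hn β r ''
      ((simplex m) ×ˢ (Set.univ.pi fun _ : Fin m => Set.univ.pi fun _ : Fin n => S)) := by
  ext u
  constructor
  · rintro ⟨α, hα, R, hR, hu⟩
    refine ⟨(α, R), ⟨hα, ?_⟩, funext fun k => (hu k).symm⟩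
    intro a _; intro b _; exact hR a b
  · rintro ⟨⟨α, R⟩, ⟨hα, hR⟩, rfl⟩
    exact ⟨α, hα, R, fun a b => hR a (Set.mem_univ a) b (Set.mem_univ b), fun k => rfl⟩

lemma continuous_psiMap (hn : 0 < n) (β : ℝ) (r : Fin K → Fin m → Fin n → ℝ) :
    Continuous (psiMap K m n hn β r) := by
  apply continuous_pi
  intro k
  apply Continuous.finset_sup'_apply (bFin hn)
  intro b _
  apply continuous_finset_sum
  intro a _
  exact ((continuous_apply a).comp continuous_fst).mul
    (continuous_const.add (continuous_const.mul
      (((continuous_apply k).comp ((continuous_apply b).comp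
        ((continuous_apply a).comp continuous_snd))))))

lemma isCompact_simplex : IsCompact (simplex m) := by
  have hsub : simplex m ⊆ Set.Icc (0 : Fin m → ℝ) 1 := by
    rintro α ⟨h0, h1⟩
    constructor
    · intro a; exact h0 a
    · intro a
      calc α a ≤ ∑ a', α a' := Finset.single_le_sum (fun a' _ => h0 a') (Finset.mem_univ a)
        _ = 1 := h1
  have hclosed : IsClosed (simplex m) := by
    have heq : simplex m = (⋂ a, {α : Fin m → ℝ | 0 ≤ α a}) ∩ {α | ∑ a, α a = 1} := by
      ext α; simp [simplex, Set.mem_iInter, forall_and]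
    rw [heq]
    exact (isClosed_iInter fun a => isClosed_le continuous_const (continuous_apply a)).inter
      (isClosed_eq (continuous_finset_sum _ fun a _ => continuous_apply a) continuous_const)
  exact isCompact_Icc.of_isClosed_subset hclosed hsub

lemma isCompact_psi (hn : 0 < n) (β : ℝ) (r : Fin K → Fin m → Fin n → ℝ)
    {S : Set (Fin K → ℝ)} (hS : IsCompact S) :
    IsCompact (psi K m n hn β r S) := by
  rw [psi_eq_image]
  exact (isCompact_simplex.prod
    (isCompact_univ_pi fun _ => isCompact_univ_pi fun _ => hS)).image
    (continuous_psiMap hn β r)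

lemma exists_pareto_le_of_compact {S : Set (Fin K → ℝ)} (hS : IsCompact S) {s : Fin K → ℝ}
    (hs : s ∈ S) : ∃ x ∈ pareto K S, x ≤ s := by
  have hTc : IsCompact (S ∩ {x | x ≤ s}) :=
    hS.inter_right (isClosed_Iic (a := s))
  have hTne : (S ∩ {x | x ≤ s}).Nonempty := ⟨s, hs, (le_refl s : s ∈ {x | x ≤ s})⟩
  obtain ⟨x, hxT, hxmin⟩ := hTc.exists_isMinOn hTne
    ((continuous_finset_sum Finset.univ fun k _ => continuous_apply k).continuousOn :
      ContinuousOn (fun x : Fin K → ℝ => ∑ k, x k) _)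
  refine ⟨x, ⟨hxT.1, ?_⟩, hxT.2⟩
  intro y hyS hyx
  have hyT : y ∈ S ∩ {x | x ≤ s} := ⟨hyS, le_trans hyx hxT.2⟩
  have hsum : ∑ k, x k ≤ ∑ k, y k := hxmin hyT
  have hsum' : ∑ k, y k ≤ ∑ k, x k := Finset.sum_le_sum fun k _ => hyx k
  funext k
  exact (Finset.sum_eq_sum_iff_of_le fun k _ => hyx k).1 (le_antisymm hsum' hsum) k
    (Finset.mem_univ k)
lemma psi_upset_subset (hn : 0 < n) {β : ℝ} (hβ0 : 0 ≤ β) {r : Fin K → Fin m → Fin n → ℝ}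
    (hr : ∀ k a b, r k a b ∈ Set.Icc (0:ℝ) (1 - β)) {V : Set (Fin K → ℝ)}
    (hVI : V ⊆ Set.Icc 0 1) :
    psi K m n hn β r (upset K V) ⊆ upset K (psi K m n hn β r V) := by
  intro u hu
  obtain ⟨α, hα, R, hR, huk⟩ := hu
  have huI : u ∈ Set.Icc (0 : Fin K → ℝ) 1 :=
    psi_subset_Icc hn hβ0 hr (upset_subset_Icc V) ⟨α, hα, R, hR, huk⟩
  choose R' hR'V hR'le using fun a b => (hR a b).2
  refine ⟨huI, fun k => Finset.univ.sup' (bFin hn)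
      (fun b => ∑ a, α a * (r k a b + β * R' a b k)), ⟨α, hα, R', hR'V, fun k => rfl⟩, ?_⟩
  intro k
  rw [huk k]
  apply Finset.sup'_le
  intro b _
  refine Finset.le_sup'_of_le _ (Finset.mem_univ b) ?_
  apply Finset.sum_le_sum
  intro a _
  have := hR'le a b k
  have h := hα.1 a
  nlinarith [mul_nonneg h (mul_nonneg hβ0 (sub_nonneg.mpr this))]

lemma exists_pareto_le_psi (hn : 0 < n) {β : ℝ} (hβ0 : 0 ≤ β)
    {r : Fin K → Fin m → Fin n → ℝ} (hr : ∀ k a b, r k a b ∈ Set.Icc (0:ℝ) (1 - β))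
    {V : Set (Fin K → ℝ)} (hV : memF K V) {s : Fin K → ℝ}
    (hs : s ∈ psi K m n hn β r V) :
    ∃ x ∈ pareto K (psi K m n hn β r V), x ≤ s := by
  have hupc : IsCompact (upset K V) :=
    isCompact_Icc.of_isClosed_subset hV.2.2.2.1 (upset_subset_Icc V)
  have hcomp := isCompact_psi hn β r hupc
  have hsub1 : psi K m n hn β r V ⊆ psi K m n hn β r (upset K V) :=
    psi_mono hn β r (subset_upset hV.2.1)
  obtain ⟨x, ⟨hxΨ, hxmin⟩, hxs⟩ := exists_pareto_le_of_compact hcomp (hsub1 hs)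
  obtain ⟨-, v, hvΨ, hvx⟩ := psi_upset_subset hn hβ0 hr hV.2.1 hxΨ
  have hvex : v = x := hxmin v (hsub1 hvΨ) hvx
  refine ⟨x, ⟨hvex ▸ hvΨ, fun y hy hyx => hxmin y (hsub1 hy) hyx⟩, hxs⟩

lemma psi_nonempty (hm : 0 < m) (hn : 0 < n) (β : ℝ) (r : Fin K → Fin m → Fin n → ℝ)
    {V : Set (Fin K → ℝ)} (hV : V.Nonempty) :
    (psi K m n hn β r V).Nonempty := by
  obtain ⟨v0, hv0⟩ := hV
  have hm' : (m : ℝ) ≠ 0 := Nat.cast_ne_zero.mpr hm.ne'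
  refine ⟨fun k => Finset.univ.sup' (bFin hn)
      (fun b => ∑ a : Fin m, (m : ℝ)⁻¹ * (r k a b + β * v0 k)),
    fun _ => (m : ℝ)⁻¹, ⟨fun _ => by positivity, ?_⟩, fun _ _ => v0, fun _ _ => hv0,
    fun k => rfl⟩
  simp [Finset.sum_const, Finset.card_univ, mul_inv_cancel₀ hm']
/-- The defining set of `eDom`. -/
def eSet (K : ℕ) (U V : Set (Fin K → ℝ)) : Set ℝ :=
  {ε : ℝ | 0 ≤ ε ∧ ∀ u ∈ U, ∃ v ∈ V, ∀ i, v i ≤ u i + ε}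

lemma eDom_eq (U V : Set (Fin K → ℝ)) : eDom K U V = sInf (eSet K U V) := rfl

lemma eSet_bddBelow (U V : Set (Fin K → ℝ)) : BddBelow (eSet K U V) :=
  ⟨0, fun _ hx => hx.1⟩

lemma one_mem_eSet {U V : Set (Fin K → ℝ)} (hUI : U ⊆ Set.Icc 0 1)
    (hV : V.Nonempty) (hVI : V ⊆ Set.Icc 0 1) : (1:ℝ) ∈ eSet K U V := by
  obtain ⟨v0, hv0⟩ := hV
  refine ⟨zero_le_one, fun u hu => ⟨v0, hv0, fun i => ?_⟩⟩
  have h1 := (hVI hv0).2 i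
  have h2 := (hUI hu).1 i
  simp only [Pi.one_apply] at h1
  simp only [Pi.zero_apply] at h2
  linarith

lemma eDom_nonneg (U V : Set (Fin K → ℝ)) : 0 ≤ eDom K U V :=
  Real.sInf_nonneg fun _ hx => hx.1

lemma mem_eSet_of_le {U V : Set (Fin K → ℝ)} {ε ε' : ℝ} (h : ε ∈ eSet K U V)
    (hle : ε ≤ ε') : ε' ∈ eSet K U V := by
  refine ⟨le_trans h.1 hle, fun u hu => ?_⟩
  obtain ⟨v, hv, hvi⟩ := h.2 u hu
  exact ⟨v, hv, fun i => le_trans (hvi i) (by linarith)⟩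

lemma eDom_step (hm : 0 < m) (hn : 0 < n) {β : ℝ} (hβ : β ∈ Set.Ico (0:ℝ) 1)
    {r : Fin K → Fin m → Fin n → ℝ} (hr : ∀ k a b, r k a b ∈ Set.Icc (0:ℝ) (1 - β))
    {U V : Set (Fin K → ℝ)} (hU : memF K U) (hV : memF K V) {ε : ℝ}
    (hε : ε ∈ eSet K U V) :
    β * ε ∈ eSet K (pareto K (psi K m n hn β r U)) (pareto K (psi K m n hn β r V)) := by
  refine ⟨mul_nonneg hβ.1 hε.1, fun u hu => ?_⟩
  obtain ⟨α, hα, R, hR, huk⟩ := hu.1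
  choose R' hR'V hR'le using fun a b => hε.2 (R a b) (hR a b)
  set u' : Fin K → ℝ := fun k => Finset.univ.sup' (bFin hn)
    (fun b => ∑ a, α a * (r k a b + β * R' a b k)) with hu'def
  have hu'Ψ : u' ∈ psi K m n hn β r V := ⟨α, hα, R', hR'V, fun k => rfl⟩
  have hu'le : ∀ k, u' k ≤ u k + β * ε := by
    intro k
    rw [huk k]
    apply Finset.sup'_le
    intro b _
    have hsum : ∑ a, α a * (r k a b + β * R' a b k)
        ≤ (∑ a, α a * (r k a b + β * R a b k)) + β * ε := by
      have h1 : ∀ a, α a * (r k a b + β * R' a b k)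
          ≤ α a * (r k a b + β * R a b k) + α a * (β * ε) := by
        intro a
        have h2 := hR'le a b k
        have h3 := hα.1 a
        nlinarith [mul_nonneg h3 (mul_nonneg hβ.1 (sub_nonneg.mpr
          (by linarith [hR'le a b k] : R' a b k ≤ R a b k + ε - 0)))]
      calc ∑ a, α a * (r k a b + β * R' a b k)
          ≤ ∑ a, (α a * (r k a b + β * R a b k) + α a * (β * ε)) :=
            Finset.sum_le_sum fun a _ => h1 a
        _ = (∑ a, α a * (r k a b + β * R a b k)) + (∑ a, α a) * (β * ε) := by
            rw [Finset.sum_add_distrib, Finset.sum_mul]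
        _ = (∑ a, α a * (r k a b + β * R a b k)) + β * ε := by rw [hα.2, one_mul]
    refine le_trans hsum ?_
    have : ∑ a, α a * (r k a b + β * R a b k)
        ≤ Finset.univ.sup' (bFin hn) (fun b => ∑ a, α a * (r k a b + β * R a b k)) :=
      Finset.le_sup' (fun b => ∑ a, α a * (r k a b + β * R a b k)) (Finset.mem_univ b)
    linarith
  obtain ⟨v, hvP, hvu'⟩ := exists_pareto_le_psi hn hβ.1 hr hV hu'Ψ
  exact ⟨v, hvP, fun i => le_trans (hvu' i) (hu'le i)⟩

lemma eDom_phi_le (hm : 0 < m) (hn : 0 < n) {β : ℝ} (hβ : β ∈ Set.Ico (0:ℝ) 1)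
    {r : Fin K → Fin m → Fin n → ℝ} (hr : ∀ k a b, r k a b ∈ Set.Icc (0:ℝ) (1 - β))
    {U V : Set (Fin K → ℝ)} (hU : memF K U) (hV : memF K V) :
    eDom K (pareto K (psi K m n hn β r U)) (pareto K (psi K m n hn β r V))
      ≤ β * eDom K U V := by
  have hne : (eSet K U V).Nonempty := ⟨1, one_mem_eSet hU.2.1 hV.1 hV.2.1⟩
  have hstep : ∀ ε ∈ eSet K U V,
      eDom K (pareto K (psi K m n hn β r U)) (pareto K (psi K m n hn β r V)) ≤ β * ε :=
    fun ε hε => csInf_le (eSet_bddBelow _ _) (eDom_step hm hn hβ hr hU hV hε)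
  rcases eq_or_lt_of_le hβ.1 with hβ0 | hβ0
  · have := hstep 1 (one_mem_eSet hU.2.1 hV.1 hV.2.1)
    rw [← hβ0] at this ⊢
    simpa using this
  · rw [mul_comm, ← div_le_iff₀ hβ0]
    refine le_csInf hne fun ε hε => ?_
    rw [div_le_iff₀ hβ0, mul_comm]
    exact hstep ε hε
lemma hausdorffEdist_upset_ne_top {A B : Set (Fin K → ℝ)} (hA : A.Nonempty)
    (hAI : A ⊆ Set.Icc 0 1) (hB : B.Nonempty) (hBI : B ⊆ Set.Icc 0 1) :
    EMetric.hausdorffEdist (upset K A) (upset K B) ≠ ⊤ :=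
  Metric.hausdorffEdist_ne_top_of_nonempty_of_bounded (upset_nonempty hA hAI)
    (upset_nonempty hB hBI) (upset_bounded A) (upset_bounded B)

lemma eDom_le_hausdorff {A B : Set (Fin K → ℝ)} (hA : A.Nonempty)
    (hAI : A ⊆ Set.Icc 0 1) (hB : B.Nonempty) (hBI : B ⊆ Set.Icc 0 1) :
    eDom K A B ≤ Metric.hausdorffDist (upset K A) (upset K B) := by
  have hfin := hausdorffEdist_upset_ne_top hA hAI hB hBI
  refine le_of_forall_gt_imp_ge_of_dense fun ε hε => ?_
  have hε0 : (0:ℝ) ≤ ε := le_of_lt (lt_of_le_of_lt Metric.hausdorffDist_nonneg hε)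
  refine csInf_le (eSet_bddBelow _ _) ⟨hε0, fun u hu => ?_⟩
  have h1 : Metric.infDist u (upset K B) < ε :=
    lt_of_le_of_lt (Metric.infDist_le_hausdorffDist_of_mem (mem_upset_self hAI hu) hfin) hε
  obtain ⟨x, hx, hdx⟩ := (Metric.infDist_lt_iff (upset_nonempty hB hBI)).1 h1
  obtain ⟨-, v, hvB, hvx⟩ := hx
  refine ⟨v, hvB, fun i => le_trans (hvx i) ?_⟩
  have hd : |u i - x i| < ε :=
    lt_of_le_of_lt (by simpa [Real.dist_eq] using dist_le_pi_dist u x i) hdx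
  have := (abs_lt.1 hd).1
  linarith

lemma hausdorff_le_max {A B : Set (Fin K → ℝ)} (hA : A.Nonempty)
    (hAI : A ⊆ Set.Icc 0 1) (hB : B.Nonempty) (hBI : B ⊆ Set.Icc 0 1) :
    Metric.hausdorffDist (upset K A) (upset K B) ≤ max (eDom K A B) (eDom K B A) := by
  refine le_of_forall_gt_imp_ge_of_dense fun c hc => ?_
  have hc0 : (0:ℝ) ≤ c :=
    le_of_lt (lt_of_le_of_lt (le_max_of_le_left (eDom_nonneg A B)) hc)
  have key : ∀ (S T : Set (Fin K → ℝ)), S.Nonempty → S ⊆ Set.Icc 0 1 → T.Nonempty →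
      T ⊆ Set.Icc 0 1 → eDom K S T < c → ∀ x ∈ upset K S,
      Metric.infDist x (upset K T) ≤ c := by
    intro S T hS hSI hT hTI hlt x hx
    obtain ⟨hxI, u, huS, hux⟩ := hx
    have hne : (eSet K S T).Nonempty := ⟨1, one_mem_eSet hSI hT hTI⟩
    obtain ⟨ε0, hε0S, hε0c⟩ := exists_lt_of_csInf_lt hne hlt
    obtain ⟨v, hvT, hvle⟩ := hε0S.2 u huS
    set y : Fin K → ℝ := fun i => max (x i) (v i) with hy
    have hyI : y ∈ Set.Icc (0 : Fin K → ℝ) 1 := by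
      constructor
      · intro i; exact le_trans (hxI.1 i) (le_max_left _ _)
      · intro i
        have := hxI.2 i
        have := (hTI hvT).2 i
        simp only [Pi.one_apply] at *
        exact max_le ‹x i ≤ 1› ‹v i ≤ 1›
    have hyB : y ∈ upset K T := ⟨hyI, v, hvT, fun i => le_max_right _ _⟩
    have hdxy : dist x y ≤ ε0 := by
      rw [dist_pi_le_iff hε0S.1]
      intro i
      rw [Real.dist_eq, abs_le]
      have h1 := hvle i
      have h2 := hux i
      have h3 := le_max_left (x i) (v i)
      have h4 : max (x i) (v i) ≤ x i + ε0 :=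
        max_le (by linarith [hε0S.1]) (by linarith)
      constructor
      · simp only [hy]; linarith
      · simp only [hy]; linarith [hε0S.1]
    exact le_trans (le_trans (Metric.infDist_le_dist_of_mem hyB) hdxy) (le_of_lt hε0c)
  refine Metric.hausdorffDist_le_of_infDist hc0 ?_ ?_
  · exact key A B hA hAI hB hBI (lt_of_le_of_lt (le_max_left _ _) hc)
  · intro y hy
    exact key B A hB hBI hA hAI (lt_of_le_of_lt (le_max_right _ _) hc) y hy
/-- the dynamic programming operator `Φ = Λ ∘ Ψ` is a β-contraction
on `(𝓕, d)`: `e(Φ(U), Φ(V)) ≤ β·e(U,V)` and `d(Φ(U), Φ(V)) ≤ β·d(U,V)`. -/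
theorem phi_contraction {K m n : ℕ} (hK : 0 < K) (hm : 0 < m) (hn : 0 < n)
    (β : ℝ) (hβ : β ∈ Set.Ico (0:ℝ) 1)
    (r : Fin K → Fin m → Fin n → ℝ) (hr : ∀ k a b, r k a b ∈ Set.Icc (0:ℝ) (1 - β))
    (U V : Set (Fin K → ℝ)) (hU : memF K U) (hV : memF K V) :
    eDom K (pareto K (psi K m n hn β r U)) (pareto K (psi K m n hn β r V))
        ≤ β * eDom K U V ∧
      dF K (pareto K (psi K m n hn β r U)) (pareto K (psi K m n hn β r V))
        ≤ β * dF K U V := by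

  obtain ⟨hβ0, hβ1⟩ := hβ
  have hβ' : β ∈ Set.Ico (0:ℝ) 1 := ⟨hβ0, hβ1⟩
  set PU := pareto K (psi K m n hn β r U) with hPU
  set PV := pareto K (psi K m n hn β r V) with hPV
  have hPUsub : PU ⊆ Set.Icc 0 1 := fun x hx => psi_subset_Icc hn hβ0 hr hU.2.1 hx.1
  have hPVsub : PV ⊆ Set.Icc 0 1 := fun x hx => psi_subset_Icc hn hβ0 hr hV.2.1 hx.1
  have hPUne : PU.Nonempty := by
    obtain ⟨s, hs⟩ := psi_nonempty hm hn β r hU.1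
    obtain ⟨x, hx, -⟩ := exists_pareto_le_psi hn hβ0 hr hU hs
    exact ⟨x, hx⟩
  have hPVne : PV.Nonempty := by
    obtain ⟨s, hs⟩ := psi_nonempty hm hn β r hV.1
    obtain ⟨x, hx, -⟩ := exists_pareto_le_psi hn hβ0 hr hV hs
    exact ⟨x, hx⟩
  have e1 := eDom_phi_le hm hn hβ' hr hU hV
  have e2 := eDom_phi_le hm hn hβ' hr hV hU
  refine ⟨e1, ?_⟩
  have h1 : Metric.hausdorffDist (upset K PU) (upset K PV)
      ≤ max (eDom K PU PV) (eDom K PV PU) :=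
    hausdorff_le_max hPUne hPUsub hPVne hPVsub
  have h2 : eDom K U V ≤ dF K U V := eDom_le_hausdorff hU.1 hU.2.1 hV.1 hV.2.1
  have h3 : eDom K V U ≤ dF K U V := by
    have h := eDom_le_hausdorff hV.1 hV.2.1 hU.1 hU.2.1
    rw [Metric.hausdorffDist_comm] at h
    exact h
  refine le_trans h1 (le_trans (max_le_max e1 e2) (max_le ?_ ?_))
  · exact mul_le_mul_of_nonneg_left h2 hβ0
  · exact mul_le_mul_of_nonneg_left h3 hβ0
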